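/- arXiv:2509.05247 — 6 statements merged into one kernel-verified Lean document; each statement's English description precedes it below -/
import Mathlib

section
/- Let g ∈ BV_loc^lc(ℝ,ℝ) and f : [a,b] → ℝ be g-continuous on [a,b]. Then: (1) f is left-continuous at each t ∈ (a,b]; (2) if g is continuous at t ∈ [a,b] then so is f; (3) if g is constant on some interval [u,v] ⊆ [a,b], then f is constant on [u,v]. -/
open Set Filter MeasureTheory Topology
open scoped Classical

/-- Total variation of `g` on the interval `[a,b]`. -/
noncomputable def varOn (g : ℝ → ℝ) (a b : ℝ) : ℝ := (eVariationOn g (Set.Icc a b)).toReal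

/-- `g` is left-continuous at every point. -/
def LeftCont (g : ℝ → ℝ) : Prop := ∀ t : ℝ, ContinuousWithinAt g (Set.Iio t) t

/-- `g` has locally bounded variation. -/
def LocBV (g : ℝ → ℝ) : Prop := ∀ a b : ℝ, BoundedVariationOn g (Set.Icc a b)

/-- The variation function `g̃` of `g`. -/
noncomputable def varFun (g : ℝ → ℝ) (t : ℝ) : ℝ :=
  if 0 ≤ t then g 0 + varOn g 0 t else g 0 - varOn g t 0

/-- Jump (discontinuity) points of a left-continuous `g`. -/
def Dg (g : ℝ → ℝ) : Set ℝ := {t | ¬ ContinuousWithinAt g (Set.Ioi t) t}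

/-- Interiors of constancy intervals of `g`. -/
def Cg (g : ℝ → ℝ) : Set ℝ :=
  {t | ∃ ε > 0, ∀ s ∈ Set.Ioo (t - ε) (t + ε), g s = g t}

/-- Left endpoints of constancy components of `g` which are not jump points. -/
def Ngm (g : ℝ → ℝ) : Set ℝ :=
  {t | t ∉ Dg g ∧ t ∉ Cg g ∧ ∃ ε > 0, ∀ s ∈ Set.Ioo t (t + ε), g s = g t}

/-- Right endpoints of constancy components of `g` which are not jump points. -/
def Ngp (g : ℝ → ℝ) : Set ℝ :=
  {t | t ∉ Dg g ∧ t ∉ Cg g ∧ ∃ ε > 0, ∀ s ∈ Set.Ioo (t - ε) t, g s = g t}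

/-- The point `t*`: `t` itself, unless `t` lies in the interior of a constancy interval,
in which case it is the right endpoint of that constancy component. -/
noncomputable def tStar (g : ℝ → ℝ) (t : ℝ) : ℝ :=
  if t ∈ Cg g then sSup {s | t ≤ s ∧ ∀ u ∈ Set.Icc t s, g u = g t} else t

/-- Stieltjes derivative of `F` w.r.t. a possibly non-monotonic derivator `g`. -/
def HasStieltjesDerivAt (g F : ℝ → ℝ) (t d : ℝ) : Prop :=
  (t ∈ Dg g →
    Tendsto (fun s => (F s - F t) / (g s - g t)) (nhdsWithin t (Set.Ioi t)) (nhds d)) ∧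
  (t ∉ Dg g →
    Tendsto (fun s => (F s - F (tStar g t)) / (g s - g (tStar g t)))
      (nhdsWithin (tStar g t) {s | g s ≠ g (tStar g t)}) (nhds d))

/-- `f` is `g`-continuous on `[a,b]` (w.r.t. the pseudometric `|g̃ s - g̃ t|`). -/
def GCont (g f : ℝ → ℝ) (a b : ℝ) : Prop :=
  ∀ t ∈ Set.Icc a b, ∀ ε > 0, ∃ δ > 0, ∀ s ∈ Set.Icc a b,
    |varFun g s - varFun g t| < δ → |f s - f t| < ε

/-- `F` is `g`-absolutely continuous on `[a,b]`. -/
def GAC (g F : ℝ → ℝ) (a b : ℝ) : Prop :=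
  ∀ ε > 0, ∃ δ > 0, ∀ n : ℕ, ∀ c d : ℕ → ℝ,
    (∀ i < n, a ≤ c i ∧ c i < d i ∧ d i ≤ b) →
    (∀ i < n, ∀ j < n, i ≠ j → Disjoint (Set.Ioo (c i) (d i)) (Set.Ioo (c j) (d j))) →
    (∑ i ∈ Finset.range n, varOn g (c i) (d i)) < δ →
    (∑ i ∈ Finset.range n, |F (d i) - F (c i)|) < ε

/-- Integral of `f` over `s` with respect to a signed measure `μ`. -/
noncomputable def sInt (μ : MeasureTheory.SignedMeasure ℝ) (f : ℝ → ℝ) (s : Set ℝ) : ℝ :=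
  (∫ x in s, f x ∂μ.toJordanDecomposition.posPart) -
    (∫ x in s, f x ∂μ.toJordanDecomposition.negPart)

/-- The function `φ` of the everywhere version of the FTC. -/
noncomputable def phi (g : ℝ → ℝ) (t : ℝ) : ℝ :=
  if t ∈ Ngm g then
    Filter.liminf (fun s => |(g s - g t) / (varFun g s - varFun g t)|)
      (nhdsWithin t (Set.Iio t))
  else if t ∈ Dg g ∪ Cg g ∪ Ngp g then
    Filter.liminf (fun s => |(g s - g (tStar g t)) / (varFun g s - varFun g (tStar g t))|)
      (nhdsWithin (tStar g t) (Set.Ioi (tStar g t)))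
  else
    Filter.liminf (fun s => |(g s - g t) / (varFun g s - varFun g t)|)
      (nhdsWithin t {t}ᶜ)

/-!
The variation function is `g̃ = g 0 + variationOnFromTo g univ 0`, whose one-sided jumps at `t`
are the distances from `g t` to the one-sided limits of `g`. Hence `g̃` is continuous from either
side at every point where `g` is. A `g`-continuous `f` is continuous along every
set along which `g̃` is, and is constant on the level sets of `g̃`; a constancy interval of `g`
lies in one such level set.
-/

lemma LocBV.locallyBoundedVariationOn {g : ℝ → ℝ} (hbv : LocBV g) :
    LocallyBoundedVariationOn g univ :=
  fun a b _ _ => by simpa only [univ_inter] using hbv a b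

lemma varFun_eq_add_variationOnFromTo (g : ℝ → ℝ) :
    varFun g = fun t => g 0 + variationOnFromTo g univ 0 t := by
  ext t
  unfold varFun varOn
  split_ifs with ht
  · rw [variationOnFromTo.eq_of_le _ _ ht, univ_inter]
  · rw [variationOnFromTo.eq_of_ge _ _ (not_le.1 ht).le, univ_inter, sub_eq_add_neg]

section LocBV

variable {g : ℝ → ℝ} (hbv : LocBV g) {t : ℝ}
include hbv

lemma LocBV.continuousWithinAt_Iio_varFun (hg : ContinuousWithinAt g (Iio t) t) :
    ContinuousWithinAt (varFun g) (Iio t) t := by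
  have := variationOnFromTo.tendsto_left (mem_univ 0) (mem_univ t)
    hbv.locallyBoundedVariationOn (l := g t) (by rwa [univ_inter])
  rw [univ_inter, dist_self, sub_zero] at this
  rw [varFun_eq_add_variationOnFromTo]
  exact continuousWithinAt_const.add this

lemma LocBV.continuousWithinAt_Ioi_varFun (hg : ContinuousWithinAt g (Ioi t) t) :
    ContinuousWithinAt (varFun g) (Ioi t) t := by
  have := variationOnFromTo.tendsto_right (mem_univ 0) (mem_univ t)
    hbv.locallyBoundedVariationOn (l := g t) (by rwa [univ_inter])
  rw [univ_inter, dist_self, add_zero] at this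
  rw [varFun_eq_add_variationOnFromTo]
  exact continuousWithinAt_const.add this

lemma LocBV.varFun_eq_of_forall_mem_Icc_eq {u v : ℝ} (hg : ∀ x ∈ Icc u v, g x = g u)
    {x : ℝ} (hx : x ∈ Icc u v) : varFun g x = varFun g u := by
  rw [varFun_eq_add_variationOnFromTo, add_right_inj,
    variationOnFromTo.eq_left_iff hbv.locallyBoundedVariationOn (mem_univ _) (mem_univ _)
      (mem_univ _),
    variationOnFromTo.eq_zero_iff_of_ge hbv.locallyBoundedVariationOn (mem_univ _) (mem_univ _)
      hx.1]
  rintro y ⟨-, hy⟩ z ⟨-, hz⟩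
  rw [hg y ⟨hy.1, hy.2.trans hx.2⟩, hg z ⟨hz.1, hz.2.trans hx.2⟩, edist_self]

end LocBV

section GCont

variable {g f : ℝ → ℝ} {a b : ℝ} (hf : GCont g f a b)
include hf

lemma GCont.continuousWithinAt {s : Set ℝ} (hs : s ⊆ Icc a b) {t : ℝ} (ht : t ∈ Icc a b)
    (hg : ContinuousWithinAt (varFun g) s t) : ContinuousWithinAt f s t := by
  rw [ContinuousWithinAt, Metric.tendsto_nhds] at hg ⊢
  intro ε hε
  obtain ⟨δ, hδ, hfδ⟩ := hf t ht ε hε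
  filter_upwards [hg δ hδ, self_mem_nhdsWithin] with y hy hys
  rw [Real.dist_eq] at hy ⊢
  exact hfδ y (hs hys) hy

lemma GCont.eq_of_varFun_eq {s t : ℝ} (hs : s ∈ Icc a b) (ht : t ∈ Icc a b)
    (h : varFun g s = varFun g t) : f s = f t := by
  by_contra hne
  obtain ⟨δ, hδ, hfδ⟩ := hf t ht |f s - f t| (abs_pos.2 (sub_ne_zero.2 hne))
  exact lt_irrefl _ (hfδ s hs (by rwa [h, sub_self, abs_zero]))

end GCont

theorem stmt5_general (a b : ℝ) (g f : ℝ → ℝ) (hlc : LeftCont g) (hbv : LocBV g)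
    (hf : GCont g f a b) :
    (∀ t ∈ Set.Ioc a b, ContinuousWithinAt f (Set.Icc a b ∩ Set.Iio t) t) ∧
    (∀ t ∈ Set.Icc a b, ContinuousWithinAt g (Set.Icc a b) t →
      ContinuousWithinAt f (Set.Icc a b) t) ∧
    (∀ u v : ℝ, Set.Icc u v ⊆ Set.Icc a b → (∀ x ∈ Set.Icc u v, g x = g u) →
      ∀ x ∈ Set.Icc u v, f x = f u) := by
  refine ⟨fun t ht => ?_, fun t ht hg => ?_, fun u v huv hg x hx => ?_⟩
  · exact hf.continuousWithinAt inter_subset_left ⟨ht.1.le, ht.2⟩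
      ((hbv.continuousWithinAt_Iio_varFun (hlc t)).mono inter_subset_right)
  · refine hf.continuousWithinAt subset_rfl ht ?_
    have hleft := hbv.continuousWithinAt_Iio_varFun (hlc t)
    rcases ht.2.eq_or_lt with rfl | htb
    · exact (continuousWithinAt_Iio_iff_Iic.1 hleft).mono fun y hy => hy.2
    · have hright : ContinuousWithinAt g (Ioi t) t :=
        hg.mono_of_mem_nhdsWithin (Icc_mem_nhdsGT_of_mem ⟨ht.1, htb⟩)
      exact (continuousAt_iff_continuous_left'_right'.2
        ⟨hleft, hbv.continuousWithinAt_Ioi_varFun hright⟩).continuousWithinAt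
  · exact hf.eq_of_varFun_eq (huv hx) (huv ⟨le_rfl, hx.1.trans hx.2⟩)
      (hbv.varFun_eq_of_forall_mem_Icc_eq hg hx)

/-- Basic properties of `g`-continuous functions. -/
theorem stmt5 (a b : ℝ) (hab : a < b) (g f : ℝ → ℝ) (hlc : LeftCont g) (hbv : LocBV g)
    (hf : GCont g f a b) :
    (∀ t ∈ Set.Ioc a b, ContinuousWithinAt f (Set.Icc a b ∩ Set.Iio t) t) ∧
    (∀ t ∈ Set.Icc a b, ContinuousWithinAt g (Set.Icc a b) t →
      ContinuousWithinAt f (Set.Icc a b) t) ∧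
    (∀ u v : ℝ, Set.Icc u v ⊆ Set.Icc a b → (∀ x ∈ Set.Icc u v, g x = g u) →
      ∀ x ∈ Set.Icc u v, f x = f u) :=
  stmt5_general a b g f hlc hbv hf
end

section
/- Let g ∈ BV_loc^lc(ℝ,ℝ). If f : [a,b] → ℝ is ğ-continuous (continuous with respect to the pseudometric |g(s) - g(t)|), then f is g-continuous (continuous with respect to the pseudometric |g̃(s) - g̃(t)|), where g̃ is the variation function of g. The converse fails in general. -/
open Set Filter MeasureTheory Topology
open scoped Classical

/-! Since `g̃(s) - g̃(t)` is the variation of `g` on `[t, s]`, it dominates `|g s - g t|`, so a `δ`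
for the pseudometric of `g` also works for that of `g̃`. For the converse, the tent
`g t = 1 - |t - 1|` takes the same value at `1/2` and `3/2`, while `g̃` increases by at least
`|g 1 - g (1/2)| = 1/2` between them; so `f = g̃` is `g`-continuous but not `ğ`-continuous. -/

lemma abs_sub_le_varOn {g : ℝ → ℝ} {a b x y : ℝ} (hg : BoundedVariationOn g (Icc a b))
    (hx : x ∈ Icc a b) (hy : y ∈ Icc a b) : |g x - g y| ≤ varOn g a b := by
  have h := ENNReal.toReal_mono hg (eVariationOn.edist_le g hx hy)
  rwa [edist_dist, ENNReal.toReal_ofReal dist_nonneg, Real.dist_eq] at h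

lemma varOn_add {g : ℝ → ℝ} {a b c : ℝ} (hab : BoundedVariationOn g (Icc a b))
    (hbc : BoundedVariationOn g (Icc b c)) (hb : b ∈ Icc a c) :
    varOn g a b + varOn g b c = varOn g a c := by
  have h := eVariationOn.Icc_add_Icc g (s := univ) hb.1 hb.2 (mem_univ b)
  simp only [univ_inter] at h
  rw [varOn, varOn, varOn, ← ENNReal.toReal_add hab hbc, h]

lemma varFun_sub_varFun {g : ℝ → ℝ} (hg : LocBV g) {t s : ℝ} (hts : t ≤ s) :
    varFun g s - varFun g t = varOn g t s := by
  unfold varFun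
  rcases le_or_gt 0 t with h0t | h0t
  · rw [if_pos (h0t.trans hts), if_pos h0t]
    linarith [varOn_add (hg 0 t) (hg t s) ⟨h0t, hts⟩]
  · rw [if_neg h0t.not_ge]
    rcases le_or_gt 0 s with h0s | h0s
    · rw [if_pos h0s]
      linarith [varOn_add (hg t 0) (hg 0 s) ⟨h0t.le, h0s⟩]
    · rw [if_neg h0s.not_ge]
      linarith [varOn_add (hg t s) (hg s 0) ⟨hts, h0s.le⟩]

lemma abs_sub_le_abs_varFun_sub {g : ℝ → ℝ} (hg : LocBV g) (s t : ℝ) :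
    |g s - g t| ≤ |varFun g s - varFun g t| := by
  wlog hts : t ≤ s generalizing s t
  · rw [abs_sub_comm, abs_sub_comm (varFun g s)]
    exact this t s (le_of_not_ge hts)
  calc |g s - g t| ≤ varOn g t s := abs_sub_le_varOn (hg t s) ⟨hts, le_rfl⟩ ⟨le_rfl, hts⟩
    _ = varFun g s - varFun g t := (varFun_sub_varFun hg hts).symm
    _ ≤ |varFun g s - varFun g t| := le_abs_self _

theorem gCont_of_forall_abs_sub_lt {g f : ℝ → ℝ} {a b : ℝ} (hg : LocBV g)
    (hf : ∀ t ∈ Icc a b, ∀ ε > 0, ∃ δ > 0, ∀ s ∈ Icc a b, |g s - g t| < δ → |f s - f t| < ε) :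
    GCont g f a b := by
  intro t ht ε hε
  obtain ⟨δ, hδ, hfδ⟩ := hf t ht ε hε
  exact ⟨δ, hδ, fun s hs hst => hfδ s hs ((abs_sub_le_abs_varFun_sub hg s t).trans_lt hst)⟩

lemma locBV_of_lipschitzWith {g : ℝ → ℝ} {K : NNReal} (hg : LipschitzWith K g) : LocBV g := by
  intro a b
  simpa only [univ_inter] using hg.locallyBoundedVariationOn univ a b trivial trivial

def tent (t : ℝ) : ℝ := 1 - |t - 1|

lemma lipschitzWith_tent : LipschitzWith 1 tent :=
  LipschitzWith.of_dist_le_mul fun x y => by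
    rw [Real.dist_eq, Real.dist_eq, NNReal.coe_one, one_mul, tent, tent,
      sub_sub_sub_cancel_left, abs_sub_comm x y, ← sub_sub_sub_cancel_right y x 1]
    exact abs_abs_sub_abs_le_abs_sub _ _

lemma not_forall_abs_sub_tent_lt :
    ¬ ∀ t ∈ Icc (0 : ℝ) 2, ∀ ε > 0, ∃ δ > 0, ∀ s ∈ Icc (0 : ℝ) 2,
      |tent s - tent t| < δ → |varFun tent s - varFun tent t| < ε := by
  intro h
  obtain ⟨δ, hδ, hvar⟩ := h (1 / 2) (by norm_num) (1 / 2) (by norm_num)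
  have hbv := locBV_of_lipschitzWith lipschitzWith_tent
  have hjump : |varFun tent (3 / 2) - varFun tent (1 / 2)| < 1 / 2 :=
    hvar (3 / 2) (by norm_num) (by norm_num [tent, hδ])
  have hrise : 1 / 2 ≤ varFun tent (3 / 2) - varFun tent (1 / 2) := by
    rw [varFun_sub_varFun hbv (by norm_num)]
    calc (1 / 2 : ℝ) = |tent 1 - tent (1 / 2)| := by norm_num [tent]
      _ ≤ varOn tent (1 / 2) (3 / 2) := abs_sub_le_varOn (hbv _ _) (by norm_num) (by norm_num)
  linarith [le_abs_self (varFun tent (3 / 2) - varFun tent (1 / 2))]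

/-- `ğ`-continuity (w.r.t. `|g s - g t|`) implies `g`-continuity (w.r.t. `|g̃ s - g̃ t|`);
the converse fails in general. -/
theorem stmt7 :
    (∀ (g f : ℝ → ℝ) (a b : ℝ), a < b → LeftCont g → LocBV g →
      (∀ t ∈ Set.Icc a b, ∀ ε > 0, ∃ δ > 0, ∀ s ∈ Set.Icc a b,
        |g s - g t| < δ → |f s - f t| < ε) →
      GCont g f a b) ∧
    ¬ (∀ (g f : ℝ → ℝ) (a b : ℝ), a < b → LeftCont g → LocBV g →
      GCont g f a b →
      (∀ t ∈ Set.Icc a b, ∀ ε > 0, ∃ δ > 0, ∀ s ∈ Set.Icc a b,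
        |g s - g t| < δ → |f s - f t| < ε)) := by
  refine ⟨fun g f a b _ _ hg hf => gCont_of_forall_abs_sub_lt hg hf, fun h => ?_⟩
  have hcont : LeftCont tent := fun t => lipschitzWith_tent.continuous.continuousWithinAt
  have hgcont : GCont tent (varFun tent) 0 2 := fun t _ ε hε => ⟨ε, hε, fun _ _ hst => hst⟩
  exact not_forall_abs_sub_tent_lt
    (h tent (varFun tent) 0 2 two_pos hcont (locBV_of_lipschitzWith lipschitzWith_tent) hgcont)
end

section
/- Every g-absolutely continuous function F : [a,b] → ℝ is left-continuous and of bounded variation on [a,b]. -/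
/-!
Testing the `g`-absolute continuity of `F` on the single interval `(s, t)` gives
`|F t - F s| < ε` once `var_g [s, t]` is small, and testing it on a partition of `[s, t]` bounds
the variation of `F` there. Since `g` is left-continuous and of bounded variation,
`var_g [s, t] → 0` as `s → t⁻`: this gives left continuity of `F` and bounded variation on
`[s, t]`. To the right of `t` the function `g` may jump, but still `var_g (t, u] → 0` as
`u → t⁺`, so `F` has bounded variation on `(t, u]`, hence a right limit at `t`, hence bounded
variation on `[t, u]`. A real-induction argument (the supremum of the points `x` with `F` of
bounded variation on `[a, x]`) assembles these local bounds into one on `[a, b]`.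
-/

open Set Filter MeasureTheory Topology
open scoped Classical

open scoped ENNReal

/-- `GAC g F a b` unfolds to `∀ ε > 0, ∃ δ > 0, GACModulus g F a b ε δ`. -/
def GACModulus (g F : ℝ → ℝ) (a b ε δ : ℝ) : Prop :=
  ∀ n : ℕ, ∀ c d : ℕ → ℝ,
    (∀ i < n, a ≤ c i ∧ c i < d i ∧ d i ≤ b) →
    (∀ i < n, ∀ j < n, i ≠ j → Disjoint (Set.Ioo (c i) (d i)) (Set.Ioo (c j) (d j))) →
    (∑ i ∈ Finset.range n, varOn g (c i) (d i)) < δ →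
    (∑ i ∈ Finset.range n, |F (d i) - F (c i)|) < ε

section Variation

variable {E : Type*} [PseudoEMetricSpace E]

lemma BoundedVariationOn.Icc_union {f : ℝ → E} {a b c : ℝ} (hab : a ≤ b) (hbc : b ≤ c)
    (h₁ : BoundedVariationOn f (Icc a b)) (h₂ : BoundedVariationOn f (Icc b c)) :
    BoundedVariationOn f (Icc a c) := by
  have := eVariationOn.Icc_add_Icc f (s := univ) hab hbc (mem_univ b)
  simp only [univ_inter] at this
  rw [BoundedVariationOn, ← this]
  exact ENNReal.add_ne_top.2 ⟨h₁, h₂⟩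

lemma boundedVariationOn_Icc_of_forall_left_right {f : ℝ → E} {a b : ℝ} (hab : a ≤ b)
    (hleft : ∀ t ∈ Ioc a b, ∃ s < t, BoundedVariationOn f (Icc s t))
    (hright : ∀ t ∈ Ico a b, ∃ u > t, BoundedVariationOn f (Icc t u)) :
    BoundedVariationOn f (Icc a b) := by
  set S := {x ∈ Icc a b | BoundedVariationOn f (Icc a x)}
  have haS : a ∈ S := ⟨⟨le_rfl, hab⟩, by simp [BoundedVariationOn]⟩
  have hS : BddAbove S := ⟨b, fun x hx => hx.1.2⟩
  set c := sSup S
  have hac : a ≤ c := le_csSup hS haS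
  have hcb : c ≤ b := csSup_le ⟨a, haS⟩ fun x hx => hx.1.2
  have hcS : c ∈ S := by
    refine ⟨⟨hac, hcb⟩, ?_⟩
    rcases hac.eq_or_lt with hca | hac'
    · exact hca ▸ haS.2
    obtain ⟨s, hsc, hs⟩ := hleft c ⟨hac', hcb⟩
    obtain ⟨x, hxS, hx⟩ := exists_lt_of_lt_csSup ⟨a, haS⟩ (max_lt hsc hac')
    exact hxS.2.Icc_union (le_max_right _ _ |>.trans hx.le) (le_csSup hS hxS)
      (hs.mono (Icc_subset_Icc (le_max_left _ _ |>.trans hx.le) le_rfl))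
  rcases hcb.eq_or_lt with hcb' | hcb'
  · exact hcb' ▸ hcS.2
  obtain ⟨u, hcu, hu⟩ := hright c ⟨hac, hcb'⟩
  have : min u b ∈ S := ⟨⟨hac.trans (le_min hcu.le hcb), min_le_right _ _⟩,
    hcS.2.Icc_union hac (le_min hcu.le hcb) (hu.mono (Icc_subset_Icc le_rfl (min_le_left _ _)))⟩
  exact absurd (le_csSup hS this) (not_le.2 (lt_min hcu hcb'))

variable {g : ℝ → E} {η : ℝ≥0∞}

lemma exists_eVariationOn_Icc_lt_of_continuousWithinAt_Iio {a t : ℝ} (hat : a < t)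
    (hg : BoundedVariationOn g (Icc a t)) (hlc : ContinuousWithinAt g (Iio t) t) (hη : 0 < η) :
    ∃ s ∈ Ioo a t, eVariationOn g (Icc s t) < η := by
  have hc : ContinuousWithinAt g (Icc a t ∩ Iic t) t :=
    (continuousWithinAt_Iio_iff_Iic.1 hlc).mono inter_subset_right
  have h := (hg.tendsto_eVariationOn_Icc_zero_left hc).mono_left
    (nhdsWithin_mono t Ioo_subset_Icc_self)
  have : (𝓝[Ioo a t] t).NeBot := right_nhdsWithin_Ioo_neBot hat
  obtain ⟨s, hs, hst⟩ := ((h.eventually (gt_mem_nhds hη)).and self_mem_nhdsWithin).exists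
  refine ⟨s, hst, ?_⟩
  rwa [inter_eq_right.2 (Icc_subset_Icc_left hst.1.le)] at hs

lemma exists_eVariationOn_Ioc_lt {t b : ℝ} (htb : t < b) (hg : BoundedVariationOn g (Icc t b))
    (hη : 0 < η) : ∃ u ∈ Ioc t b, eVariationOn g (Ioc t u) < η := by
  have h := (hg.tendsto_eVariationOn_Ioc_zero t).mono_left
    (nhdsWithin_mono t Ioc_subset_Icc_self)
  have : (𝓝[Ioc t b] t).NeBot := left_nhdsWithin_Ioc_neBot htb
  obtain ⟨u, hu, htu⟩ := ((h.eventually (gt_mem_nhds hη)).and self_mem_nhdsWithin).exists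
  refine ⟨u, htu, ?_⟩
  rwa [inter_eq_right.2 (Ioc_subset_Icc_self.trans (Icc_subset_Icc_right htu.2))] at hu

end Variation

lemma BoundedVariationOn.Icc_of_Ioc {E : Type*} [PseudoMetricSpace E] [CompleteSpace E]
    {f : ℝ → E} {a b : ℝ} (hab : a < b) (h : BoundedVariationOn f (Ioc a b)) :
    BoundedVariationOn f (Icc a b) := by
  obtain ⟨l, hl⟩ := h.exists_tendsto_right a
  have hIoc : Icc a b ∩ Ioi a = Ioc a b := by ext; simp; grind
  have := eVariationOn.eVariationOn_on_inter_Ici_eq_Ioi_add_edist (f := f) (l := l)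
    (s := Icc a b) ?_ (left_mem_Icc.2 hab.le) ?_
  · rw [inter_eq_left.2 Icc_subset_Ici_self, hIoc] at this
    rw [BoundedVariationOn, this]
    exact ENNReal.add_ne_top.2 ⟨h, edist_ne_top _ _⟩
  · rw [hIoc]
    exact left_nhdsWithin_Ioc_neBot hab
  · rwa [hIoc, ← inter_eq_left.2 Ioc_subset_Ioi_self]

namespace GACModulus

variable {g F : ℝ → ℝ} {a b ε δ : ℝ}

lemma eVariationOn_le (hF : GACModulus g F a b ε δ) {s : Set ℝ} (hs : s ⊆ Icc a b)
    (hsmall : ∀ x ∈ s, ∀ y ∈ s, eVariationOn g (Icc x y) < ENNReal.ofReal δ) :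
    eVariationOn F s ≤ ENNReal.ofReal ε := by
  -- strictly monotone partitions, since `GACModulus` only accepts nondegenerate intervals
  rw [eVariationOn.eVariationOn_eq_strictMonoOn]
  refine iSup_le fun ⟨n, u, hu, us⟩ => ?_
  have hu' : ∀ {i j}, i ≤ j → j ≤ n → u i ≤ u j := fun hij hj =>
    hu.monotoneOn (mem_Iic.2 (hij.trans hj)) (mem_Iic.2 hj) hij
  have hlt := hsmall _ (us 0 (mem_Iic.2 (Nat.zero_le n))) _ (us n (mem_Iic.2 le_rfl))
  have hsum : ∑ i ∈ Finset.range n, eVariationOn g (Icc (u i) (u (i + 1))) =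
      eVariationOn g (Icc (u 0) (u n)) := by
    have := eVariationOn.sum' g (I := fun i => u (min i n))
      (fun i j hij => hu' (min_le_min_right n hij) (min_le_right j n)) (n := n)
    simp only [min_eq_left (Nat.zero_le n), min_self] at this
    rw [← this]
    refine Finset.sum_congr rfl fun i hi => ?_
    rw [Finset.mem_range] at hi
    rw [min_eq_left hi.le, min_eq_left hi]
  have hintervals : ∀ i < n, a ≤ u i ∧ u i < u (i + 1) ∧ u (i + 1) ≤ b := fun i hi =>
    ⟨(hs (us i (mem_Iic.2 hi.le))).1, hu (mem_Iic.2 hi.le) (mem_Iic.2 hi) (Nat.lt_succ_self i),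
      (hs (us (i + 1) (mem_Iic.2 hi))).2⟩
  have hdisjoint : ∀ i < n, ∀ j < n, i ≠ j →
      Disjoint (Ioo (u i) (u (i + 1))) (Ioo (u j) (u (j + 1))) := by
    intro i hi j hj hij
    rw [Set.Ioo_disjoint_Ioo]
    rcases hij.lt_or_gt with h | h
    · exact (min_le_left _ _).trans ((hu' h hj.le).trans (le_max_right _ _))
    · exact (min_le_right _ _).trans ((hu' h hi.le).trans (le_max_left _ _))
  have hvar : ∑ i ∈ Finset.range n, varOn g (u i) (u (i + 1)) < δ := by
    have hfin := ne_top_of_lt hlt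
    simp only [varOn]
    rw [← ENNReal.toReal_sum fun i hi => ne_top_of_le_ne_top hfin <| eVariationOn.mono g <|
      Icc_subset_Icc (hu' (Nat.zero_le i) (Finset.mem_range.1 hi).le)
        (hu' (Finset.mem_range.1 hi) le_rfl), hsum]
    exact ENNReal.toReal_lt_of_lt_ofReal hlt
  have hsumF := hF n u (fun i => u (i + 1)) hintervals hdisjoint hvar
  calc ∑ i ∈ Finset.range n, edist (F (u (i + 1))) (F (u i))
      = ENNReal.ofReal (∑ i ∈ Finset.range n, |F (u (i + 1)) - F (u i)|) := by
        rw [ENNReal.ofReal_sum_of_nonneg fun i _ => abs_nonneg _]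
        simp only [edist_dist, Real.dist_eq]
    _ ≤ ENNReal.ofReal ε := ENNReal.ofReal_le_ofReal hsumF.le

lemma exists_eVariationOn_Icc_le_left (hF : GACModulus g F a b ε δ) (hδ : 0 < δ) {t : ℝ}
    (ht : t ∈ Ioc a b) (hg : BoundedVariationOn g (Icc a t))
    (hlc : ContinuousWithinAt g (Iio t) t) :
    ∃ s ∈ Ioo a t, eVariationOn F (Icc s t) ≤ ENNReal.ofReal ε := by
  obtain ⟨s, hs, hvar⟩ := exists_eVariationOn_Icc_lt_of_continuousWithinAt_Iio ht.1 hg hlc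
    (ENNReal.ofReal_pos.2 hδ)
  exact ⟨s, hs, hF.eVariationOn_le (Icc_subset_Icc hs.1.le ht.2) fun x hx y hy =>
    (eVariationOn.mono g (Icc_subset_Icc hx.1 hy.2)).trans_lt hvar⟩

lemma exists_boundedVariationOn_Icc_right (hF : GACModulus g F a b ε δ) (hδ : 0 < δ) {t : ℝ}
    (ht : t ∈ Ico a b) (hg : BoundedVariationOn g (Icc t b)) :
    ∃ u ∈ Ioc t b, BoundedVariationOn F (Icc t u) := by
  obtain ⟨u, hu, hvar⟩ := exists_eVariationOn_Ioc_lt ht.2 hg (ENNReal.ofReal_pos.2 hδ)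
  have hvarF := hF.eVariationOn_le (Ioc_subset_Icc_self.trans (Icc_subset_Icc ht.1 hu.2))
    fun x hx y hy => (eVariationOn.mono g (Icc_subset_Ioc hx.1 hy.2)).trans_lt hvar
  exact ⟨u, hu, .Icc_of_Ioc hu.1 (ne_top_of_le_ne_top ENNReal.ofReal_ne_top hvarF)⟩

end GACModulus

lemma GAC.continuousWithinAt_Iio {g F : ℝ → ℝ} {a b t : ℝ} (hF : GAC g F a b)
    (ht : t ∈ Ioc a b) (hg : BoundedVariationOn g (Icc a t))
    (hlc : ContinuousWithinAt g (Iio t) t) : ContinuousWithinAt F (Iio t) t := by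
  rw [Metric.continuousWithinAt_iff]
  intro ε hε
  obtain ⟨δ, hδ, hmod⟩ := hF (ε / 2) (half_pos hε)
  obtain ⟨s, hs, hvar⟩ := GACModulus.exists_eVariationOn_Icc_le_left hmod hδ ht hg hlc
  refine ⟨t - s, sub_pos.2 hs.2, fun {x} hx hxt => ?_⟩
  have hsx : s ≤ x := by
    rw [Real.dist_eq, abs_of_neg (sub_neg.2 hx)] at hxt
    linarith
  have := (eVariationOn.edist_le F (show x ∈ Icc s t from ⟨hsx, hx.le⟩)
    (right_mem_Icc.2 hs.2.le)).trans hvar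
  rw [edist_le_ofReal (half_pos hε).le] at this
  linarith

/-- Every `g`-absolutely continuous function is left-continuous and of bounded
variation on `[a,b]`. -/
theorem stmt8 (a b : ℝ) (hab : a < b) (g F : ℝ → ℝ) (hlc : LeftCont g) (hbv : LocBV g)
    (hF : GAC g F a b) :
    (∀ t ∈ Set.Ioc a b, ContinuousWithinAt F (Set.Icc a b ∩ Set.Iio t) t) ∧
    BoundedVariationOn F (Set.Icc a b) := by
  refine ⟨fun t ht => (hF.continuousWithinAt_Iio ht (hbv a t) (hlc t)).mono inter_subset_right,
    ?_⟩
  obtain ⟨δ, hδ, hmod⟩ := hF 1 one_pos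
  refine boundedVariationOn_Icc_of_forall_left_right hab.le (fun t ht => ?_) (fun t ht => ?_)
  · obtain ⟨s, hs, hvar⟩ :=
      GACModulus.exists_eVariationOn_Icc_le_left hmod hδ ht (hbv a t) (hlc t)
    exact ⟨s, hs.2, ne_top_of_le_ne_top ENNReal.ofReal_ne_top hvar⟩
  · obtain ⟨u, hu, hFu⟩ := GACModulus.exists_boundedVariationOn_Icc_right hmod hδ ht (hbv t b)
    exact ⟨u, hu.1, hFu⟩
end

section
/- Let g ∈ BV_loc^lc(ℝ,ℝ) and f ∈ L¹_g([a,b), ℝ). Then the function F(t) := ∫_{[a,t)} f dμ_g is g-absolutely continuous on [a,b]. -/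
open Set Filter MeasureTheory Topology
open scoped Classical

/-!
`F(d) - F(c)` is the integral of `f` over `[c, d)`, which is bounded by the integral of `|f|`
against `|μ_g|`. For disjoint intervals these bounds add up to the integral of `|f|` over their
union, whose `|μ_g|`-measure is `∑ var_g [cᵢ, dᵢ]`; absolute continuity of the Lebesgue integral
then makes the sum small.
-/

open scoped ENNReal

lemma exists_pos_setLIntegral_lt_ofReal_of_measure_lt {α : Type*} [MeasurableSpace α]
    {ν : Measure α} {f : α → ℝ≥0∞} (hf : ∫⁻ x, f x ∂ν ≠ ∞) {ε : ℝ} (hε : 0 < ε) :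
    ∃ δ > 0, ∀ U, ν U < ENNReal.ofReal δ → ∫⁻ x in U, f x ∂ν < ENNReal.ofReal ε := by
  obtain ⟨δ', hδ', hsmall⟩ :=
    exists_pos_setLIntegral_lt_of_measure_lt hf (ENNReal.ofReal_pos.2 hε).ne'
  obtain ⟨δ, -, hδpos, hδlt⟩ := ENNReal.lt_iff_exists_real_btwn.1 hδ'
  exact ⟨δ, ENNReal.ofReal_pos.1 hδpos, fun U hU => hsmall U (hU.trans hδlt)⟩

lemma disjoint_Ico_of_disjoint_Ioo {a₁ a₂ b₁ b₂ : ℝ}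
    (h : Disjoint (Ioo a₁ a₂) (Ioo b₁ b₂)) : Disjoint (Ico a₁ a₂) (Ico b₁ b₂) :=
  Ico_disjoint_Ico.2 (Ioo_disjoint_Ioo.1 h)

namespace MeasureTheory.SignedMeasure

variable (μ : SignedMeasure ℝ) {f : ℝ → ℝ}

lemma integrableOn_posPart {s : Set ℝ} (hf : IntegrableOn f s μ.totalVariation) :
    IntegrableOn f s μ.toJordanDecomposition.posPart :=
  hf.mono_measure (Measure.le_add_right le_rfl)

lemma integrableOn_negPart {s : Set ℝ} (hf : IntegrableOn f s μ.totalVariation) :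
    IntegrableOn f s μ.toJordanDecomposition.negPart :=
  hf.mono_measure (Measure.le_add_left le_rfl)

lemma sInt_union {s t : Set ℝ} (hst : Disjoint s t) (ht : MeasurableSet t)
    (hf : IntegrableOn f (s ∪ t) μ.totalVariation) :
    sInt μ f (s ∪ t) = sInt μ f s + sInt μ f t := by
  have hP := μ.integrableOn_posPart hf
  have hN := μ.integrableOn_negPart hf
  rw [sInt, sInt, sInt, setIntegral_union hst ht hP.left_of_union hP.right_of_union,
    setIntegral_union hst ht hN.left_of_union hN.right_of_union]
  ring

lemma sInt_Ico_sub_sInt_Ico {a c d : ℝ} (hac : a ≤ c) (hcd : c ≤ d)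
    (hf : IntegrableOn f (Ico a d) μ.totalVariation) :
    sInt μ f (Ico a d) - sInt μ f (Ico a c) = sInt μ f (Ico c d) := by
  have hunion := Ico_union_Ico_eq_Ico hac hcd
  rw [← hunion] at hf
  rw [← hunion, μ.sInt_union Ico_disjoint_Ico_same measurableSet_Ico hf]
  ring

lemma enorm_sInt_le (s : Set ℝ) :
    ‖sInt μ f s‖ₑ ≤ ∫⁻ x in s, ‖f x‖ₑ ∂μ.totalVariation := by
  calc ‖sInt μ f s‖ₑ
      ≤ ‖∫ x in s, f x ∂μ.toJordanDecomposition.posPart‖ₑ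
        + ‖∫ x in s, f x ∂μ.toJordanDecomposition.negPart‖ₑ := enorm_sub_le
    _ ≤ ∫⁻ x in s, ‖f x‖ₑ ∂μ.toJordanDecomposition.posPart
        + ∫⁻ x in s, ‖f x‖ₑ ∂μ.toJordanDecomposition.negPart :=
      add_le_add (enorm_integral_le_lintegral_enorm f) (enorm_integral_le_lintegral_enorm f)
    _ = ∫⁻ x in s, ‖f x‖ₑ ∂μ.totalVariation := by
      rw [totalVariation, Measure.restrict_add, lintegral_add_measure]

lemma sum_enorm_sInt_le {ι : Type*} {I : Finset ι} {s : ι → Set ℝ}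
    (hdisj : (I : Set ι).PairwiseDisjoint s) (hmeas : ∀ i ∈ I, MeasurableSet (s i)) :
    ∑ i ∈ I, ‖sInt μ f (s i)‖ₑ ≤ ∫⁻ x in ⋃ i ∈ I, s i, ‖f x‖ₑ ∂μ.totalVariation := by
  rw [lintegral_biUnion_finset hdisj hmeas]
  exact Finset.sum_le_sum fun i _ => μ.enorm_sInt_le (s i)

lemma totalVariation_biUnion_Ico_le {g : ℝ → ℝ} {a b : ℝ}
    (hvar : ∀ s t : ℝ, s ∈ Icc a b → t ∈ Icc a b → s ≤ t →
      μ.totalVariation (Ico s t) = ENNReal.ofReal (varOn g s t))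
    {ι : Type*} {I : Finset ι} {c d : ι → ℝ} (hcd : ∀ i ∈ I, a ≤ c i ∧ c i ≤ d i ∧ d i ≤ b) :
    μ.totalVariation (⋃ i ∈ I, Ico (c i) (d i)) ≤ ENNReal.ofReal (∑ i ∈ I, varOn g (c i) (d i)) :=
  calc μ.totalVariation (⋃ i ∈ I, Ico (c i) (d i))
      ≤ ∑ i ∈ I, μ.totalVariation (Ico (c i) (d i)) := measure_biUnion_finset_le _ _
    _ = ∑ i ∈ I, ENNReal.ofReal (varOn g (c i) (d i)) :=
      Finset.sum_congr rfl fun i hi => have h := hcd i hi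
        hvar _ _ ⟨h.1, h.2.1.trans h.2.2⟩ ⟨h.1.trans h.2.1, h.2.2⟩ h.2.1
    _ = ENNReal.ofReal (∑ i ∈ I, varOn g (c i) (d i)) :=
      (ENNReal.ofReal_sum_of_nonneg fun _ _ => ENNReal.toReal_nonneg).symm

end MeasureTheory.SignedMeasure

theorem stmt10_general (a b : ℝ) (g f : ℝ → ℝ)
    (μ : MeasureTheory.SignedMeasure ℝ)
    (hvar : ∀ s t : ℝ, s ∈ Set.Icc a b → t ∈ Set.Icc a b → s ≤ t →
      μ.totalVariation (Set.Ico s t) = ENNReal.ofReal (varOn g s t))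
    (hf : MeasureTheory.IntegrableOn f (Set.Ico a b) μ.totalVariation) :
    GAC g (fun t => sInt μ f (Set.Ico a t)) a b := by
  intro ε hε
  obtain ⟨δ, hδ, hsmall⟩ := exists_pos_setLIntegral_lt_ofReal_of_measure_lt hf.2.ne hε
  refine ⟨δ, hδ, fun n c d hcd hdisj hsum => ?_⟩
  have hcd' : ∀ i ∈ Finset.range n, a ≤ c i ∧ c i ≤ d i ∧ d i ≤ b := fun i hi =>
    have h := hcd i (Finset.mem_range.1 hi)
    ⟨h.1, h.2.1.le, h.2.2⟩
  set U := ⋃ i ∈ Finset.range n, Ico (c i) (d i)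
  have hUsub : U ⊆ Ico a b :=
    iUnion₂_subset fun i hi => Ico_subset_Ico (hcd' i hi).1 (hcd' i hi).2.2
  have hU : μ.totalVariation U < ENNReal.ofReal δ :=
    (μ.totalVariation_biUnion_Ico_le hvar hcd').trans_lt
      ((ENNReal.ofReal_lt_ofReal_iff hδ).2 hsum)
  have hint := hsmall U ((Measure.restrict_apply_le _ _).trans_lt hU)
  rw [Measure.restrict_restrict_of_subset hUsub] at hint
  rw [← ENNReal.ofReal_lt_ofReal_iff hε, ENNReal.ofReal_sum_of_nonneg fun _ _ => abs_nonneg _]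
  calc ∑ i ∈ Finset.range n, ENNReal.ofReal |sInt μ f (Ico a (d i)) - sInt μ f (Ico a (c i))|
      = ∑ i ∈ Finset.range n, ‖sInt μ f (Ico (c i) (d i))‖ₑ :=
        Finset.sum_congr rfl fun i hi => by
          rw [μ.sInt_Ico_sub_sInt_Ico (hcd' i hi).1 (hcd' i hi).2.1
            (hf.mono_set (Ico_subset_Ico_right (hcd' i hi).2.2)), Real.enorm_eq_ofReal_abs]
    _ ≤ ∫⁻ x in U, ‖f x‖ₑ ∂μ.totalVariation :=
        μ.sum_enorm_sInt_le (fun i hi j hj hij => disjoint_Ico_of_disjoint_Ioo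
          (hdisj i (Finset.mem_range.1 hi) j (Finset.mem_range.1 hj) hij))
          fun _ _ => measurableSet_Ico
    _ < ENNReal.ofReal ε := hint

/-- The indefinite Lebesgue–Stieltjes integral of a `g`-integrable function is
`g`-absolutely continuous. -/
theorem stmt10 (a b : ℝ) (hab : a < b) (g f : ℝ → ℝ) (hlc : LeftCont g) (hbv : LocBV g)
    (μ : MeasureTheory.SignedMeasure ℝ)
    (hμ : ∀ s t : ℝ, s ∈ Set.Icc a b → t ∈ Set.Icc a b → s ≤ t →
      μ (Set.Ico s t) = g t - g s)
    (hvar : ∀ s t : ℝ, s ∈ Set.Icc a b → t ∈ Set.Icc a b → s ≤ t →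
      μ.totalVariation (Set.Ico s t) = ENNReal.ofReal (varOn g s t))
    (hf : MeasureTheory.IntegrableOn f (Set.Ico a b) μ.totalVariation) :
    GAC g (fun t => sInt μ f (Set.Ico a t)) a b :=
  stmt10_general a b g f μ hvar hf
end

section
/- (Density theorem) Let I ⊆ ℝ be an interval and g : ℝ → ℝ a nondecreasing left-continuous derivator with no unbounded constancy intervals. Then the set of bounded g-continuous functions lying in L¹_g(I,ℝ) is dense in L¹_g(I,ℝ). -/
open Set Filter MeasureTheory Topology
open scoped Classical

/-!
Approximate the indicator of `[a, b)` by `x ↦ r_b (g x) - r_a (g x)`, where `r_c` is the continuous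
ramp equal to `1` on `(-∞, g c - δ]` and to `0` on `[g c, ∞)`. This function is bounded and
`g`-continuous, and it differs from the indicator only on
`{x < a | g a - δ < g x} ∪ {x < b | g b - δ < g x}`; left-continuity of `g` gives
`μ {x < c | g c - δ < g x} ≤ δ`. Finite unions of intervals `[a, b)` approximate every set of
finite measure, maxima of approximants approximate unions, and simple functions are dense in `L¹`.
-/
open scoped ENNReal symmDiff

-- `comap g (𝓝 (g t))` is the neighbourhood filter of `t` for the pseudometric `|g s - g t|`.
structure IsBoundedGContinuous (g h : ℝ → ℝ) : Prop where
  measurable : Measurable h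
  bounded : ∃ M, ∀ t, |h t| ≤ M
  tendsto : ∀ t, Tendsto h (comap g (𝓝 (g t))) (𝓝 (h t))

namespace IsBoundedGContinuous

variable {g h h₁ h₂ : ℝ → ℝ}

lemma comp_of_monotone {φ : ℝ → ℝ} (hφ : Continuous φ) (hφb : ∃ M, ∀ y, |φ y| ≤ M)
    (hg : Monotone g) : IsBoundedGContinuous g (φ ∘ g) where
  measurable := hφ.measurable.comp hg.measurable
  bounded := hφb.imp fun _ hM t => hM (g t)
  tendsto _ := hφ.continuousAt.tendsto.comp tendsto_comap

lemma add (hh₁ : IsBoundedGContinuous g h₁) (hh₂ : IsBoundedGContinuous g h₂) :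
    IsBoundedGContinuous g (h₁ + h₂) where
  measurable := hh₁.measurable.add hh₂.measurable
  bounded := by
    obtain ⟨M₁, hM₁⟩ := hh₁.bounded
    obtain ⟨M₂, hM₂⟩ := hh₂.bounded
    exact ⟨M₁ + M₂, fun t => (abs_add_le _ _).trans (add_le_add (hM₁ t) (hM₂ t))⟩
  tendsto t := (hh₁.tendsto t).add (hh₂.tendsto t)

lemma sup (hh₁ : IsBoundedGContinuous g h₁) (hh₂ : IsBoundedGContinuous g h₂) :
    IsBoundedGContinuous g (h₁ ⊔ h₂) where
  measurable := hh₁.measurable.sup hh₂.measurable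
  bounded := by
    obtain ⟨M₁, hM₁⟩ := hh₁.bounded
    obtain ⟨M₂, hM₂⟩ := hh₂.bounded
    exact ⟨max M₁ M₂, fun t => (abs_max_le_max_abs_abs).trans (max_le_max (hM₁ t) (hM₂ t))⟩
  tendsto t := (hh₁.tendsto t).sup_nhds (hh₂.tendsto t)

lemma const_smul (hh : IsBoundedGContinuous g h) (c : ℝ) : IsBoundedGContinuous g (c • h) where
  measurable := hh.measurable.const_smul c
  bounded := by
    obtain ⟨M, hM⟩ := hh.bounded
    refine ⟨|c| * M, fun t => ?_⟩
    rw [Pi.smul_apply, smul_eq_mul, abs_mul]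
    exact mul_le_mul_of_nonneg_left (hM t) (abs_nonneg c)
  tendsto t := (hh.tendsto t).const_smul c

lemma exists_pos_forall_abs_sub_lt (hh : IsBoundedGContinuous g h) (t : ℝ) {ε : ℝ} (hε : 0 < ε) :
    ∃ δ > 0, ∀ s, |g s - g t| < δ → |h s - h t| < ε := by
  simpa [Real.dist_eq] using
    ((Metric.nhds_basis_ball.comap g).tendsto_iff Metric.nhds_basis_ball).1 (hh.tendsto t) ε hε

end IsBoundedGContinuous

protected lemma MeasureTheory.IsSetSemiring.Ico {α : Type*} [LinearOrder α] [Nonempty α] :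
    IsSetSemiring {s : Set α | ∃ u v, s = Ico u v} where
  empty_mem := by
    inhabit α
    exact ⟨default, default, (Ico_self _).symm⟩
  inter_mem := by
    rintro _ ⟨u, v, rfl⟩ _ ⟨u', v', rfl⟩
    exact ⟨max u u', min v v', Ico_inter_Ico⟩
  sdiff_eq_sUnion' := by
    rintro _ ⟨u, v, rfl⟩ _ ⟨u', v', rfl⟩
    classical
    refine ⟨{Ico u (min v u'), Ico (max u (max u' v')) v}, ?_, ?_, ?_⟩
    · simp only [Finset.coe_insert, Finset.coe_singleton, insert_subset_iff,
        singleton_subset_iff]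
      exact ⟨⟨_, _, rfl⟩, ⟨_, _, rfl⟩⟩
    · simp only [Finset.coe_insert, Finset.coe_singleton]
      refine PairwiseDisjoint.insert (pairwiseDisjoint_singleton _ _) fun _ hs _ => ?_
      rw [mem_singleton_iff.1 hs]
      exact Set.disjoint_left.2 fun x hx hx' => by simp at hx hx'; order
    · ext x
      simp only [Set.mem_sdiff, mem_Ico, Finset.coe_insert, Finset.coe_singleton, sUnion_insert,
        sUnion_singleton, mem_union, lt_min_iff, max_le_iff]
      grind

lemma exists_mem_supClosure_Ico_measure_symmDiff_lt {μ : Measure ℝ} [IsLocallyFiniteMeasure μ]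
    {s : Set ℝ} (hs : MeasurableSet s) (hμs : μ s ≠ ∞) {ε : ℝ≥0∞} (hε : 0 < ε) :
    ∃ t ∈ supClosure {s : Set ℝ | ∃ u v, s = Ico u v}, μ (t ∆ s) < ε := by
  set C := {s : Set ℝ | ∃ u v, s = Ico u v}
  have hgen : (inferInstance : MeasurableSpace ℝ) = MeasurableSpace.generateFrom C := by
    refine le_antisymm ?_ (MeasurableSpace.generateFrom_le ?_)
    · rw [BorelSpace.measurable_eq (α := ℝ), borel_eq_generateFrom_Ico]
      exact MeasurableSpace.generateFrom_mono fun _ ⟨l, u, _, h⟩ => ⟨l, u, h.symm⟩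
    · rintro _ ⟨u, v, rfl⟩
      exact measurableSet_Ico
  have htail : Tendsto (fun n : ℕ => μ (s \ Ico (-n : ℝ) n)) atTop (𝓝 0) := by
    have hempty : ⋂ n : ℕ, s \ Ico (-n : ℝ) n = ∅ := by
      refine eq_empty_of_forall_notMem fun x hx => ?_
      obtain ⟨n, hn⟩ := exists_nat_gt |x|
      exact (mem_iInter.1 hx n).2 ⟨by linarith [neg_abs_le x], (le_abs_self x).trans_lt hn⟩
    have := tendsto_measure_iInter_atTop (μ := μ)
      (fun n => (hs.diff measurableSet_Ico).nullMeasurableSet)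
      (fun m n hmn => sdiff_subset_sdiff_right
        (Ico_subset_Ico (neg_le_neg (Nat.cast_le.2 hmn)) (Nat.cast_le.2 hmn)))
      ⟨0, ne_top_of_le_ne_top hμs (measure_mono sdiff_subset)⟩
    rwa [hempty, measure_empty] at this
  -- the density result for semirings needs a finite measure, so restrict `μ` to a window `J`
  -- that misses at most `ε / 2` of `s`
  obtain ⟨n, hn⟩ := (htail.eventually (gt_mem_nhds (ENNReal.half_pos hε.ne'))).exists
  set J := Ico (-n : ℝ) n
  have hJ : J ∈ C := ⟨_, _, rfl⟩
  have : IsFiniteMeasure (μ.restrict J) := isFiniteMeasure_restrict.2 measure_Ico_lt_top.ne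
  obtain ⟨t, htC, ht⟩ := exists_measure_symmDiff_lt_of_generateFrom_isSetSemiring
    (μ := μ.restrict J) IsSetSemiring.Ico
    ⟨{J}, countable_singleton J, singleton_subset_iff.2 hJ, by
      rw [sUnion_singleton, Measure.restrict_apply measurableSet_Ico.compl, compl_inter_self,
        measure_empty]⟩ hgen hs
    (ENNReal.half_pos hε.ne')
  rw [Measure.restrict_apply' measurableSet_Ico] at ht
  refine ⟨t ∩ J, IsSetSemiring.Ico.isSetRing_supClosure.inter_mem htC (subset_supClosure hJ), ?_⟩
  calc μ ((t ∩ J) ∆ s) ≤ μ ((t ∆ s) ∩ J ∪ s \ J) :=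
        measure_mono fun x => by
          simp only [mem_symmDiff, mem_inter_iff, mem_union, Set.mem_sdiff]
          tauto
    _ ≤ μ ((t ∆ s) ∩ J) + μ (s \ J) := measure_union_le _ _
    _ < ε / 2 + ε / 2 := ENNReal.add_lt_add ht hn
    _ = ε := ENNReal.add_halves ε

lemma measure_setOf_lt_and_lt_le {g : ℝ → ℝ} (hmono : Monotone g) (hlc : LeftCont g)
    {μ : Measure ℝ} (hμ : ∀ s t, s ≤ t → μ (Ico s t) = ENNReal.ofReal (g t - g s)) (β c : ℝ) :
    μ {x | x < β ∧ c < g x} ≤ ENNReal.ofReal (g β - c) := by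
  set S := {x | x < β ∧ c < g x}
  -- left-continuity makes `S` open on the left, so rational left endpoints suffice
  have hcover : S ⊆ ⋃ q : {q : ℚ // (q : ℝ) ∈ S}, Ico (q : ℝ) β := by
    rintro x ⟨hxβ, hcx⟩
    obtain ⟨y, hcy, hyx⟩ :=
      (((hlc x).eventually (eventually_gt_nhds hcx)).and self_mem_nhdsWithin).exists
    obtain ⟨q, hyq, hqx⟩ := exists_rat_btwn (show y < x from hyx)
    exact mem_iUnion.2 ⟨⟨q, hqx.trans hxβ, hcy.trans_le (hmono hyq.le)⟩, hqx.le, hxβ⟩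
  have hdir : Directed (· ⊆ ·) fun q : {q : ℚ // (q : ℝ) ∈ S} => Ico (q : ℝ) β := by
    intro q r
    rcases le_total (q : ℝ) r with hqr | hrq
    · exact ⟨q, le_rfl, Ico_subset_Ico_left hqr⟩
    · exact ⟨r, Ico_subset_Ico_left hrq, le_rfl⟩
  calc μ S ≤ μ (⋃ q : {q : ℚ // (q : ℝ) ∈ S}, Ico (q : ℝ) β) := measure_mono hcover
    _ = ⨆ q : {q : ℚ // (q : ℝ) ∈ S}, μ (Ico (q : ℝ) β) := hdir.measure_iUnion
    _ ≤ ENNReal.ofReal (g β - c) := iSup_le fun q => by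
        rw [hμ _ _ q.2.1.le]
        exact ENNReal.ofReal_le_ofReal (by linarith [q.2.2])

noncomputable def ramp (c δ y : ℝ) : ℝ := max 0 (min 1 ((c - y) / δ))

lemma continuous_ramp (c δ : ℝ) : Continuous (ramp c δ) := by
  unfold ramp; fun_prop

lemma ramp_nonneg (c δ y : ℝ) : 0 ≤ ramp c δ y := le_max_left _ _

lemma ramp_le_one (c δ y : ℝ) : ramp c δ y ≤ 1 := max_le zero_le_one (min_le_left _ _)

lemma ramp_eq_one_of_le_sub {c δ y : ℝ} (hδ : 0 < δ) (hy : y ≤ c - δ) : ramp c δ y = 1 := by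
  have : 1 ≤ (c - y) / δ := by rw [le_div_iff₀ hδ]; linarith
  simp [ramp, min_eq_left this]

lemma ramp_eq_zero_of_le {c δ y : ℝ} (hδ : 0 < δ) (hy : c ≤ y) : ramp c δ y = 0 := by
  have : (c - y) / δ ≤ 0 := div_nonpos_of_nonpos_of_nonneg (by linarith) hδ.le
  simp [ramp, min_eq_right (this.trans zero_le_one), this]

section Approximation

variable {g : ℝ → ℝ} {μ : Measure ℝ}

lemma eLpNorm_ramp_comp_sub_indicator_Iio_le (hmono : Monotone g) (hlc : LeftCont g)
    (hμ : ∀ s t, s ≤ t → μ (Ico s t) = ENNReal.ofReal (g t - g s)) (β : ℝ) {δ : ℝ} (hδ : 0 < δ) :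
    eLpNorm (ramp (g β) δ ∘ g - (Iio β).indicator 1) 1 μ ≤ ENNReal.ofReal δ := by
  set E := {x | x < β ∧ g β - δ < g x}
  have hpt : ∀ x, ‖(ramp (g β) δ ∘ g - (Iio β).indicator 1 : ℝ → ℝ) x‖ ≤ E.indicator 1 x := by
    intro x
    have hE : (0 : ℝ) ≤ E.indicator 1 x := indicator_nonneg (fun _ _ => zero_le_one) x
    simp only [Pi.sub_apply, Function.comp_apply, Real.norm_eq_abs]
    by_cases hxβ : x < β
    · rw [indicator_of_mem (mem_Iio.2 hxβ), Pi.one_apply]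
      by_cases hgx : g β - δ < g x
      · rw [indicator_of_mem (show x ∈ E from ⟨hxβ, hgx⟩), Pi.one_apply, abs_le]
        constructor <;> linarith [ramp_nonneg (g β) δ (g x), ramp_le_one (g β) δ (g x)]
      · rw [ramp_eq_one_of_le_sub hδ (not_lt.1 hgx), sub_self, abs_zero]
        exact hE
    · rw [indicator_of_notMem (by simpa using hxβ), ramp_eq_zero_of_le hδ (hmono (not_lt.1 hxβ)),
        sub_zero, abs_zero]
      exact hE
  calc eLpNorm (ramp (g β) δ ∘ g - (Iio β).indicator 1) 1 μ ≤ eLpNorm (E.indicator 1) 1 μ :=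
        eLpNorm_mono_real hpt
    _ ≤ μ E := (eLpNorm_indicator_const_le (1 : ℝ) 1).trans (by simp)
    _ ≤ ENNReal.ofReal (g β - (g β - δ)) := measure_setOf_lt_and_lt_le hmono hlc hμ β _
    _ = ENNReal.ofReal δ := by rw [sub_sub_cancel]

variable (g μ) in
def GApproximable (f : ℝ → ℝ) : Prop :=
  ∀ ε : ℝ≥0∞, ε ≠ 0 → ∃ h, IsBoundedGContinuous g h ∧ eLpNorm (h - f) 1 μ ≤ ε

namespace GApproximable

variable {f f₁ f₂ : ℝ → ℝ}

lemma of_forall_eLpNorm_sub_le (hf : AEStronglyMeasurable f μ)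
    (H : ∀ ε : ℝ≥0∞, ε ≠ 0 → ∃ f', AEStronglyMeasurable f' μ ∧ GApproximable g μ f' ∧
      eLpNorm (f' - f) 1 μ ≤ ε) :
    GApproximable g μ f := by
  intro ε hε
  obtain ⟨f', hf', hf'_approx, hf'f⟩ := H (ε / 2) (ENNReal.half_pos hε).ne'
  obtain ⟨h, hh, hhf'⟩ := hf'_approx (ε / 2) (ENNReal.half_pos hε).ne'
  refine ⟨h, hh, ?_⟩
  calc eLpNorm (h - f) 1 μ = eLpNorm ((h - f') + (f' - f)) 1 μ := by rw [sub_add_sub_cancel]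
    _ ≤ eLpNorm (h - f') 1 μ + eLpNorm (f' - f) 1 μ :=
      eLpNorm_add_le (hh.measurable.aestronglyMeasurable.sub hf') (hf'.sub hf) le_rfl
    _ ≤ ε / 2 + ε / 2 := add_le_add hhf' hf'f
    _ = ε := ENNReal.add_halves ε

lemma sup (hf₁ : AEStronglyMeasurable f₁ μ) (hf₂ : AEStronglyMeasurable f₂ μ)
    (h₁ : GApproximable g μ f₁) (h₂ : GApproximable g μ f₂) : GApproximable g μ (f₁ ⊔ f₂) := by
  intro ε hε
  obtain ⟨k₁, hk₁, hk₁f⟩ := h₁ (ε / 2) (ENNReal.half_pos hε).ne'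
  obtain ⟨k₂, hk₂, hk₂f⟩ := h₂ (ε / 2) (ENNReal.half_pos hε).ne'
  refine ⟨k₁ ⊔ k₂, hk₁.sup hk₂, ?_⟩
  have hpt : ∀ x, ‖(k₁ ⊔ k₂ - f₁ ⊔ f₂) x‖ ≤ ‖(k₁ - f₁) x‖ + ‖(k₂ - f₂) x‖ := fun x =>
    (abs_max_sub_max_le_max _ _ _ _).trans (max_le_add_of_nonneg (abs_nonneg _) (abs_nonneg _))
  have hm₁ := hk₁.measurable.aestronglyMeasurable.sub hf₁
  have hm₂ := hk₂.measurable.aestronglyMeasurable.sub hf₂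
  calc eLpNorm (k₁ ⊔ k₂ - f₁ ⊔ f₂) 1 μ
      ≤ eLpNorm (fun x => ‖(k₁ - f₁) x‖ + ‖(k₂ - f₂) x‖) 1 μ := eLpNorm_mono_real hpt
    _ ≤ eLpNorm (fun x => ‖(k₁ - f₁) x‖) 1 μ + eLpNorm (fun x => ‖(k₂ - f₂) x‖) 1 μ :=
      eLpNorm_add_le hm₁.norm hm₂.norm le_rfl
    _ ≤ ε / 2 + ε / 2 := by rw [eLpNorm_norm, eLpNorm_norm]; exact add_le_add hk₁f hk₂f
    _ = ε := ENNReal.add_halves ε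

lemma const_smul (hf : GApproximable g μ f) (c : ℝ) : GApproximable g μ (c • f) := by
  intro ε hε
  obtain ⟨h, hh, hhf⟩ := hf (ε / ‖c‖ₑ) (ENNReal.div_pos_iff.2 ⟨hε, enorm_ne_top⟩).ne'
  refine ⟨c • h, hh.const_smul c, ?_⟩
  rw [← smul_sub, eLpNorm_const_smul]
  exact (by gcongr : ‖c‖ₑ * _ ≤ _).trans ENNReal.mul_div_le

end GApproximable

lemma gApproximable_indicator_Ico (hmono : Monotone g) (hlc : LeftCont g)
    (hμ : ∀ s t, s ≤ t → μ (Ico s t) = ENNReal.ofReal (g t - g s)) {a b : ℝ} (hab : a ≤ b) :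
    GApproximable g μ ((Ico a b).indicator 1) := by
  intro ε hε
  obtain ⟨δ, -, hδ₀, hδε⟩ := ENNReal.lt_iff_exists_real_btwn.1 (ENNReal.half_pos hε)
  have hδ : 0 < δ := ENNReal.ofReal_pos.1 hδ₀
  have hφ : ∀ y, |(ramp (g b) δ - ramp (g a) δ) y| ≤ 1 := fun y => by
    rw [Pi.sub_apply, abs_sub_le_iff]
    constructor <;> linarith [ramp_nonneg (g a) δ y, ramp_le_one (g a) δ y,
      ramp_nonneg (g b) δ y, ramp_le_one (g b) δ y]
  refine ⟨(ramp (g b) δ - ramp (g a) δ) ∘ g, .comp_of_monotone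
    ((continuous_ramp _ _).sub (continuous_ramp _ _)) ⟨1, hφ⟩ hmono, ?_⟩
  have hmeas : ∀ β, AEStronglyMeasurable (ramp (g β) δ ∘ g - (Iio β).indicator 1) μ := fun β =>
    (((continuous_ramp _ _).measurable.comp hmono.measurable).sub
      (measurable_const.indicator measurableSet_Iio)).aestronglyMeasurable
  have hIco : Ico a b = Iio b \ Iio a := by ext; simp
  rw [hIco, indicator_sdiff (Iio_subset_Iio hab), Pi.sub_comp, sub_sub_sub_comm]
  calc _ ≤ eLpNorm (ramp (g b) δ ∘ g - (Iio b).indicator 1) 1 μ +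
        eLpNorm (ramp (g a) δ ∘ g - (Iio a).indicator 1) 1 μ :=
      eLpNorm_sub_le (hmeas b) (hmeas a) le_rfl
    _ ≤ ENNReal.ofReal δ + ENNReal.ofReal δ :=
        add_le_add (eLpNorm_ramp_comp_sub_indicator_Iio_le hmono hlc hμ b hδ)
          (eLpNorm_ramp_comp_sub_indicator_Iio_le hmono hlc hμ a hδ)
    _ ≤ ε / 2 + ε / 2 := add_le_add hδε.le hδε.le
    _ = ε := ENNReal.add_halves ε

lemma isLocallyFiniteMeasure_of_measure_Ico
    (hμ : ∀ s t, s ≤ t → μ (Ico s t) = ENNReal.ofReal (g t - g s)) : IsLocallyFiniteMeasure μ :=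
  ⟨fun x => ⟨Ico (x - 1) (x + 1), Ico_mem_nhds (by linarith) (by linarith), by
    rw [hμ _ _ (by linarith)]; exact ENNReal.ofReal_lt_top⟩⟩

lemma gApproximable_indicator_of_mem_supClosure (hmono : Monotone g) (hlc : LeftCont g)
    (hμ : ∀ s t, s ≤ t → μ (Ico s t) = ENNReal.ofReal (g t - g s)) {t : Set ℝ}
    (ht : t ∈ supClosure {s : Set ℝ | ∃ u v, s = Ico u v}) :
    MeasurableSet t ∧ GApproximable g μ (t.indicator 1) := by
  refine supClosure_min (t := {t | MeasurableSet t ∧ GApproximable g μ (t.indicator 1)})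
    ?_ ?_ ht
  · rintro _ ⟨u, v, rfl⟩
    refine ⟨measurableSet_Ico, ?_⟩
    rcases le_total u v with huv | hvu
    · exact gApproximable_indicator_Ico hmono hlc hμ huv
    · rw [Ico_eq_empty_of_le hvu, ← Ico_self u]
      exact gApproximable_indicator_Ico hmono hlc hμ le_rfl
  · rintro A ⟨hA, hA_approx⟩ B ⟨hB, hB_approx⟩
    have hAB : (A ⊔ B).indicator 1 = A.indicator (1 : ℝ → ℝ) ⊔ B.indicator 1 := by
      ext x
      by_cases hxA : x ∈ A <;> by_cases hxB : x ∈ B <;> simp [hxA, hxB]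
    refine ⟨hA.union hB, hAB ▸ hA_approx.sup ?_ ?_ hB_approx⟩ <;>
      exact (measurable_const.indicator ‹_›).aestronglyMeasurable

lemma gApproximable_indicator (hmono : Monotone g) (hlc : LeftCont g)
    (hμ : ∀ s t, s ≤ t → μ (Ico s t) = ENNReal.ofReal (g t - g s)) {s : Set ℝ}
    (hs : MeasurableSet s) (hμs : μ s ≠ ∞) : GApproximable g μ (s.indicator 1) := by
  have := isLocallyFiniteMeasure_of_measure_Ico hμ
  refine .of_forall_eLpNorm_sub_le (measurable_const.indicator hs).aestronglyMeasurable
    fun ε hε => ?_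
  obtain ⟨t, htC, ht⟩ :=
    exists_mem_supClosure_Ico_measure_symmDiff_lt hs hμs (pos_iff_ne_zero.2 hε)
  obtain ⟨htm, ht_approx⟩ := gApproximable_indicator_of_mem_supClosure hmono hlc hμ htC
  refine ⟨t.indicator 1, (measurable_const.indicator htm).aestronglyMeasurable, ht_approx, ?_⟩
  rw [eLpNorm_indicator_sub_indicator]
  exact (eLpNorm_indicator_const_le (1 : ℝ) 1).trans (by simpa using ht.le)

theorem exists_isBoundedGContinuous_integral_abs_sub_lt (hmono : Monotone g) (hlc : LeftCont g)
    (hμ : ∀ s t, s ≤ t → μ (Ico s t) = ENNReal.ofReal (g t - g s)) {f : ℝ → ℝ}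
    (hf : Integrable f μ) {ε : ℝ} (hε : 0 < ε) :
    ∃ h, IsBoundedGContinuous g h ∧ Integrable h μ ∧ ∫ x, |f x - h x| ∂μ < ε := by
  obtain ⟨h, hfh, hh⟩ := (memLp_one_iff_integrable.2 hf).induction_dense ENNReal.one_ne_top
    (IsBoundedGContinuous g)
    (fun c s hs hμs ε hε => by
      have hcs : s.indicator (fun _ => c) = c • s.indicator 1 := by
        ext x
        by_cases hx : x ∈ s <;> simp [hx]
      rw [hcs]
      exact ((gApproximable_indicator hmono hlc hμ hs hμs.ne).const_smul c ε hε).imp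
        fun _ => And.symm)
    (fun _ _ => IsBoundedGContinuous.add) (fun _ hh => hh.measurable.aestronglyMeasurable)
    (ENNReal.ofReal_pos.2 (half_pos hε)).ne'
  have hfh_int : Integrable (f - h) μ := memLp_one_iff_integrable.1
    ⟨hf.aestronglyMeasurable.sub hh.measurable.aestronglyMeasurable,
      hfh.trans_lt ENNReal.ofReal_lt_top⟩
  refine ⟨h, hh, by simpa using hf.sub hfh_int, ?_⟩
  calc ∫ x, |f x - h x| ∂μ = (eLpNorm (f - h) 1 μ).toReal := by
        rw [eLpNorm_one_eq_lintegral_enorm,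
          ← integral_norm_eq_lintegral_enorm hfh_int.aestronglyMeasurable]
        rfl
    _ ≤ ε / 2 := ENNReal.toReal_le_of_le_ofReal (half_pos hε).le hfh
    _ < ε := half_lt_self hε

end Approximation

theorem stmt16_general (g : ℝ → ℝ) (hmono : Monotone g) (hlc : LeftCont g)
    (μ : MeasureTheory.Measure ℝ)
    (hμ : ∀ s t : ℝ, s ≤ t → μ (Set.Ico s t) = ENNReal.ofReal (g t - g s))
    (I : Set ℝ) (hI : I.OrdConnected)
    (f : ℝ → ℝ) (hf : MeasureTheory.IntegrableOn f I μ) :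
    ∀ ε > 0, ∃ h : ℝ → ℝ,
      (∃ M : ℝ, ∀ t ∈ I, |h t| ≤ M) ∧
      (∀ t ∈ I, ∀ ε' > 0, ∃ δ > 0, ∀ s ∈ I, |g s - g t| < δ → |h s - h t| < ε') ∧
      MeasureTheory.IntegrableOn h I μ ∧
      (∫ t in I, |f t - h t| ∂μ) < ε := by
  intro ε hε
  have hIm : MeasurableSet I := hI.measurableSet
  have hfI : Integrable (I.indicator f) μ := hf.integrable_indicator hIm
  obtain ⟨h, hh, hh_int, hfh⟩ :=
    exists_isBoundedGContinuous_integral_abs_sub_lt hmono hlc hμ hfI hε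
  obtain ⟨M, hM⟩ := hh.bounded
  refine ⟨h, ⟨M, fun t _ => hM t⟩, fun t _ ε' hε' => ?_, hh_int.integrableOn, ?_⟩
  · obtain ⟨δ, hδ, hδh⟩ := hh.exists_pos_forall_abs_sub_lt t hε'
    exact ⟨δ, hδ, fun s _ => hδh s⟩
  calc ∫ t in I, |f t - h t| ∂μ = ∫ t in I, |I.indicator f t - h t| ∂μ :=
        setIntegral_congr_fun hIm fun t ht => by rw [indicator_of_mem ht]
    _ ≤ ∫ t, |I.indicator f t - h t| ∂μ :=
        setIntegral_le_integral (hfI.sub hh_int).abs (.of_forall fun _ => abs_nonneg _)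
    _ < ε := hfh

/-- Density theorem: bounded `g`-continuous functions in `L¹_g(I)` are dense in `L¹_g(I)`. -/
theorem stmt16 (g : ℝ → ℝ) (hmono : Monotone g) (hlc : LeftCont g)
    (hnc : ∀ t : ℝ, (∃ s, t < s ∧ g s ≠ g t) ∧ (∃ s, s < t ∧ g s ≠ g t))
    (μ : MeasureTheory.Measure ℝ)
    (hμ : ∀ s t : ℝ, s ≤ t → μ (Set.Ico s t) = ENNReal.ofReal (g t - g s))
    (I : Set ℝ) (hI : I.OrdConnected)
    (f : ℝ → ℝ) (hf : MeasureTheory.IntegrableOn f I μ) :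
    ∀ ε > 0, ∃ h : ℝ → ℝ,
      (∃ M : ℝ, ∀ t ∈ I, |h t| ≤ M) ∧
      (∀ t ∈ I, ∀ ε' > 0, ∃ δ > 0, ∀ s ∈ I, |g s - g t| < δ → |h s - h t| < ε') ∧
      MeasureTheory.IntegrableOn h I μ ∧
      (∫ t in I, |f t - h t| ∂μ) < ε :=
  stmt16_general g hmono hlc μ hμ I hI f hf
end

section
/- Let I be an interval, g : ℝ → ℝ a nondecreasing left-continuous derivator, [c,d] ⊂ ℝ, and f : I → [c,d] a g-integrable function. Then for every ε > 0 there exists a bounded g-continuous function h : I → [c,d] (taking values in the same interval [c,d]) such that ∫_I |f - h| dμ_g < ε. -/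
/-!
Push `μ` restricted to `I` forward along `g`. Since `μ [s, t) = g t - g s`, the points having a
later point with the same `g`-value form a `μ`-null set; off it `g` has a measurable left inverse
(a generalized inverse of `g`), so `f = F ∘ g` almost everywhere for a measurable `F`. Preimages of
bounded intervals under `g` have finite `μ`-measure, so the image measure `g₊ μ` is locally finite
and `F` is approximated in `L¹(g₊ μ)` by a continuous `k`; projecting `k` onto `[c, d]` keeps it
continuous and, as `F` takes values in `[c, d]`, does not increase `|F - k|`. Then `h = k ∘ g` is
`g`-continuous and `∫ |f - h| dμ = ∫ |F - k| d(g₊ μ)`.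
-/

open Set Filter MeasureTheory Topology
open scoped Classical

theorem MeasureTheory.Integrable.exists_continuous_mem_Icc_integral_abs_sub_lt {X : Type*}
    [TopologicalSpace X] [NormalSpace X] [R1Space X] [WeaklyLocallyCompactSpace X]
    [MeasurableSpace X] [BorelSpace X] {ν : Measure X} [ν.Regular] {c d : ℝ} (hcd : c ≤ d)
    {F : X → ℝ} (hF : Integrable F ν) (hFcd : ∀ᵐ x ∂ν, F x ∈ Icc c d) {ε : ℝ} (hε : 0 < ε) :
    ∃ k : X → ℝ, Continuous k ∧ (∀ x, k x ∈ Icc c d) ∧ ∫ x, |F x - k x| ∂ν < ε := by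
  obtain ⟨k, -, hFk, hk, hk_int⟩ := hF.exists_hasCompactSupport_integral_sub_le (half_pos hε)
  set k' : X → ℝ := fun x => projIcc c d hcd (k x)
  have hk' : Continuous k' := continuous_subtype_val.comp (continuous_projIcc.comp hk)
  have hle : (fun x => |F x - k' x|) ≤ᵐ[ν] fun x => ‖F x - k x‖ := by
    filter_upwards [hFcd] with x hx
    simpa only [k', Real.norm_eq_abs, projIcc_of_mem hcd hx] using
      abs_projIcc_sub_projIcc hcd (c := F x) (d := k x)
  have hint : Integrable (fun x => ‖F x - k x‖) ν := (hF.sub hk_int).norm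
  have hint' : Integrable (fun x => |F x - k' x|) ν :=
    hint.mono (hF.aestronglyMeasurable.sub hk'.aestronglyMeasurable).norm
      (hle.mono fun x hx => by simpa only [Real.norm_eq_abs, abs_abs, abs_norm] using hx)
  refine ⟨k', hk', fun x => (projIcc c d hcd (k x)).2, ?_⟩
  calc ∫ x, |F x - k' x| ∂ν ≤ ∫ x, ‖F x - k x‖ ∂ν := integral_mono_ae hint' hint hle
    _ ≤ ε / 2 := hFk
    _ < ε := half_lt_self hε

section Stieltjes

variable {g : ℝ → ℝ} {μ : Measure ℝ}

theorem ae_forall_lt_apply_ne (hg : Monotone g)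
    (hμ : ∀ s t, μ (Ico s t) ≤ ENNReal.ofReal (g t - g s)) :
    ∀ᵐ t ∂μ, ∀ s, t < s → g s ≠ g t := by
  have squeeze : ∀ {a b c : ℝ}, a ≤ b → b ≤ c → g a = g c → g b = g c := fun hab hbc hac =>
    le_antisymm (hg hbc) (hac ▸ hg hab)
  have null_Ico : ∀ s t, g s = g t → μ (Ico s t) = 0 := fun s t h =>
    nonpos_iff_eq_zero.1 ((hμ s t).trans (by rw [h, sub_self, ENNReal.ofReal_zero]))
  set N : ℝ → Set ℝ := fun q => {t | t < q ∧ g t = g q}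
  have null_least : ∀ q, μ {t | IsLeast (N q) t} = 0 := by
    intro q
    by_cases h : ∃ t, IsLeast (N q) t
    · obtain ⟨t, ht⟩ := h
      exact measure_mono_null (fun u hu => (hu.unique ht).symm ▸ ⟨le_rfl, ht.1.1⟩)
        (null_Ico t q ht.1.2)
    · simp only [not_exists.1 h, ofPred_false, measure_empty]
  have cover : {t | ¬ ∀ s, t < s → g s ≠ g t} ⊆
      ⋃ q : ℚ, (⋃ (r : ℚ) (_ : g r = g q), Ico (r : ℝ) q) ∪ {t | IsLeast (N q) t} := by
    intro t ht
    push Not at ht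
    obtain ⟨s, hts, hst⟩ := ht
    obtain ⟨q, htq, hqs⟩ := exists_rat_btwn hts
    have htN : t ∈ N q := ⟨htq, hst.symm.trans (squeeze htq.le hqs.le hst.symm).symm⟩
    refine mem_iUnion.2 ⟨q, ?_⟩
    by_cases hleast : IsLeast (N q) t
    · exact Or.inr hleast
    · obtain ⟨t', ht'N, ht't⟩ : ∃ t' ∈ N q, t' < t := by
        simpa [IsLeast, htN, mem_lowerBounds] using hleast
      obtain ⟨r, ht'r, hrt⟩ := exists_rat_btwn ht't
      refine Or.inl (mem_biUnion (x := r) ?_ ⟨hrt.le, htq⟩)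
      exact squeeze ht'r.le (hrt.trans htq).le ht'N.2
  exact ae_iff.2 <| measure_mono_null cover <| measure_iUnion_null fun q =>
    measure_union_null (measure_biUnion_null_iff (to_countable _) |>.2 fun r h => null_Ico _ _ h)
      (null_least q)

theorem measure_Ici_le (hg : Monotone g)
    (hμ : ∀ s t, μ (Ico s t) ≤ ENNReal.ofReal (g t - g s)) {t b : ℝ}
    (hb : ∀ s, t ≤ s → g s ≤ b) : μ (Ici t) ≤ ENNReal.ofReal (b - g t) := by
  rw [← iUnion_Ico_right, Monotone.measure_iUnion fun _ _ h => Ico_subset_Ico_right h]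
  refine iSup_le fun s => (hμ t s).trans (ENNReal.ofReal_le_ofReal ?_)
  rcases le_total t s with hts | hst
  · linarith [hb s hts]
  · linarith [hg hst, hb t le_rfl]

theorem measure_Iio_le (hg : Monotone g)
    (hμ : ∀ s t, μ (Ico s t) ≤ ENNReal.ofReal (g t - g s)) {t a : ℝ}
    (ha : ∀ s ≤ t, a ≤ g s) : μ (Iio t) ≤ ENNReal.ofReal (g t - a) := by
  rw [← iUnion_Ico_left, Antitone.measure_iUnion fun _ _ h => Ico_subset_Ico_left h]
  refine iSup_le fun s => (hμ s t).trans (ENNReal.ofReal_le_ofReal ?_)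
  rcases le_total s t with hst | hts
  · linarith [ha s hst]
  · linarith [hg hts, ha t le_rfl]

theorem measure_preimage_Icc_lt_top (hg : Monotone g)
    (hμ : ∀ s t, μ (Ico s t) ≤ ENNReal.ofReal (g t - g s)) (a b : ℝ) :
    μ (g ⁻¹' Icc a b) < ⊤ := by
  have lower : μ (g ⁻¹' Icc a b ∩ Iio 0) < ⊤ := by
    by_cases h : ∃ x, g x < a
    · obtain ⟨x, hx⟩ := h
      have hsub : g ⁻¹' Icc a b ∩ Iio 0 ⊆ Ico x 0 := fun t ht =>
        ⟨le_of_not_gt fun htx => (hx.trans_le ht.1.1).not_ge (hg htx.le), ht.2⟩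
      exact (measure_mono hsub).trans_lt ((hμ x 0).trans_lt ENNReal.ofReal_lt_top)
    · push Not at h
      exact (measure_mono inter_subset_right).trans_lt
        ((measure_Iio_le hg hμ fun s _ => h s).trans_lt ENNReal.ofReal_lt_top)
  have diff_subset_Ici : g ⁻¹' Icc a b \ Iio 0 ⊆ Ici 0 := fun _ ht => mem_Ici.2 (not_lt.1 ht.2)
  have upper : μ (g ⁻¹' Icc a b \ Iio 0) < ⊤ := by
    by_cases h : ∃ y, b < g y
    · obtain ⟨y, hy⟩ := h
      have hsub : g ⁻¹' Icc a b \ Iio 0 ⊆ Ico 0 y := fun t ht =>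
        ⟨diff_subset_Ici ht, lt_of_not_ge fun hyt => (ht.1.2.trans_lt hy).not_ge (hg hyt)⟩
      exact (measure_mono hsub).trans_lt ((hμ 0 y).trans_lt ENNReal.ofReal_lt_top)
    · push Not at h
      exact (measure_mono diff_subset_Ici).trans_lt
        ((measure_Ici_le hg hμ fun s _ => h s).trans_lt ENNReal.ofReal_lt_top)
  exact (measure_le_inter_add_sdiff μ _ (Iio 0)).trans_lt (ENNReal.add_lt_top.2 ⟨lower, upper⟩)

theorem isLocallyFiniteMeasure_map (hg : Monotone g)
    (hμ : ∀ s t, μ (Ico s t) ≤ ENNReal.ofReal (g t - g s)) :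
    IsLocallyFiniteMeasure (μ.map g) :=
  ⟨fun x => ⟨Icc (x - 1) (x + 1), Icc_mem_nhds (by linarith) (by linarith), by
    rw [Measure.map_apply hg.measurable measurableSet_Icc]
    exact measure_preimage_Icc_lt_top hg hμ _ _⟩⟩

theorem Monotone.exists_measurable_leftInvOn (hg : Monotone g) :
    ∃ β : ℝ → ℝ, Measurable β ∧ LeftInvOn β g {t | ∀ s, t < s → g s ≠ g t} := by
  set β : ℝ → EReal := fun x => sSup (Real.toEReal '' {s | g s ≤ x})
  have hβ : Monotone β := fun x y hxy => sSup_le_sSup (image_mono fun s hs => le_trans hs hxy)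
  refine ⟨fun x => (β x).toReal, measurable_ereal_toReal.comp hβ.measurable, fun t ht => ?_⟩
  suffices β (g t) = t by simp only [this, EReal.toReal_coe]
  refine le_antisymm (sSup_le ?_) (le_sSup ⟨t, mem_ofPred.2 le_rfl, rfl⟩)
  rintro _ ⟨s, hs, rfl⟩
  exact EReal.coe_le_coe_iff.2 <| le_of_not_gt fun hts => ht s hts (le_antisymm hs (hg hts.le))

theorem exists_measurable_ae_eq_comp (hg : Monotone g)
    (hμ : ∀ s t, μ (Ico s t) ≤ ENNReal.ofReal (g t - g s)) {f : ℝ → ℝ}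
    (hf : AEStronglyMeasurable f μ) :
    ∃ F : ℝ → ℝ, Measurable F ∧ f =ᵐ[μ] F ∘ g := by
  obtain ⟨β, hβ, hβg⟩ := hg.exists_measurable_leftInvOn
  refine ⟨hf.mk f ∘ β, hf.stronglyMeasurable_mk.measurable.comp hβ, ?_⟩
  filter_upwards [hf.ae_eq_mk, ae_forall_lt_apply_ne hg hμ] with t hft ht
  simp only [Function.comp_apply, hβg ht, hft]

theorem exists_continuous_mem_Icc_integral_abs_sub_comp_lt (hg : Monotone g)
    (hμ : ∀ s t, μ (Ico s t) ≤ ENNReal.ofReal (g t - g s)) {c d : ℝ} (hcd : c ≤ d)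
    {f : ℝ → ℝ} (hf : Integrable f μ) (hfcd : ∀ᵐ t ∂μ, f t ∈ Icc c d) {ε : ℝ} (hε : 0 < ε) :
    ∃ k : ℝ → ℝ, Continuous k ∧ (∀ x, k x ∈ Icc c d) ∧ ∫ t, |f t - k (g t)| ∂μ < ε := by
  obtain ⟨F, hF, hfF⟩ := exists_measurable_ae_eq_comp hg hμ hf.aestronglyMeasurable
  have := isLocallyFiniteMeasure_map hg hμ
  have hF_int : Integrable F (μ.map g) :=
    (integrable_map_measure hF.aestronglyMeasurable hg.measurable.aemeasurable).2 (hf.congr hfF)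
  have hFcd : ∀ᵐ x ∂μ.map g, F x ∈ Icc c d := by
    rw [ae_map_iff hg.measurable.aemeasurable (hF measurableSet_Icc)]
    filter_upwards [hfF, hfcd] with t hft ht
    rwa [← Function.comp_apply (f := F), ← hft]
  obtain ⟨k, hk, hkcd, hFk⟩ := hF_int.exists_continuous_mem_Icc_integral_abs_sub_lt hcd hFcd hε
  refine ⟨k, hk, hkcd, ?_⟩
  calc ∫ t, |f t - k (g t)| ∂μ = ∫ t, |F (g t) - k (g t)| ∂μ :=
        integral_congr_ae (hfF.mono fun t ht => by simp only [ht, Function.comp_apply])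
    _ = ∫ x, |F x - k x| ∂μ.map g :=
        (integral_map hg.measurable.aemeasurable
          (hF.sub hk.measurable).abs.aestronglyMeasurable).symm
    _ < ε := hFk

end Stieltjes

theorem stmt17_general (g : ℝ → ℝ) (hmono : Monotone g)
    (μ : MeasureTheory.Measure ℝ)
    (hμ : ∀ s t : ℝ, s ≤ t → μ (Set.Ico s t) = ENNReal.ofReal (g t - g s))
    (I : Set ℝ) (hI : I.OrdConnected)
    (c d : ℝ) (hcd : c ≤ d) (f : ℝ → ℝ) (hrange : ∀ t ∈ I, f t ∈ Set.Icc c d)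
    (hf : MeasureTheory.IntegrableOn f I μ) :
    ∀ ε > 0, ∃ h : ℝ → ℝ,
      (∀ t ∈ I, h t ∈ Set.Icc c d) ∧
      (∀ t ∈ I, ∀ ε' > 0, ∃ δ > 0, ∀ s ∈ I, |g s - g t| < δ → |h s - h t| < ε') ∧
      (∫ t in I, |f t - h t| ∂μ) < ε := by
  intro ε hε
  have hμI : ∀ s t, μ.restrict I (Ico s t) ≤ ENNReal.ofReal (g t - g s) := by
    intro s t
    refine (Measure.restrict_apply_le _ _).trans ?_
    rcases le_total s t with hst | hts
    · exact (hμ s t hst).le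
    · simp only [Ico_eq_empty_of_le hts, measure_empty, zero_le]
  obtain ⟨k, hk, hkcd, hfk⟩ := exists_continuous_mem_Icc_integral_abs_sub_comp_lt hmono hμI hcd
    hf (ae_restrict_of_forall_mem hI.measurableSet hrange) hε
  refine ⟨k ∘ g, fun t _ => hkcd (g t), fun t _ ε' hε' => ?_, hfk⟩
  obtain ⟨δ, hδ, hkδ⟩ := Metric.continuous_iff.1 hk (g t) ε' hε'
  exact ⟨δ, hδ, fun s _ hst => hkδ (g s) hst⟩

/-- Approximation of a `[c,d]`-valued `g`-integrable function by a `g`-continuous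
function with values in the same interval `[c,d]`. -/
theorem stmt17 (g : ℝ → ℝ) (hmono : Monotone g) (hlc : LeftCont g)
    (μ : MeasureTheory.Measure ℝ)
    (hμ : ∀ s t : ℝ, s ≤ t → μ (Set.Ico s t) = ENNReal.ofReal (g t - g s))
    (I : Set ℝ) (hI : I.OrdConnected)
    (c d : ℝ) (hcd : c ≤ d) (f : ℝ → ℝ) (hrange : ∀ t ∈ I, f t ∈ Set.Icc c d)
    (hf : MeasureTheory.IntegrableOn f I μ) :
    ∀ ε > 0, ∃ h : ℝ → ℝ,
      (∀ t ∈ I, h t ∈ Set.Icc c d) ∧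
      (∀ t ∈ I, ∀ ε' > 0, ∃ δ > 0, ∀ s ∈ I, |g s - g t| < δ → |h s - h t| < ε') ∧
      (∫ t in I, |f t - h t| ∂μ) < ε :=
  stmt17_general g hmono μ hμ I hI c d hcd f hrange hf
end
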